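/- Define I₁(d) = ∫₀^∞ ξ^d * e^ξ * (e^ξ + 1) / (e^ξ - 1)³ dξ. Then the function ξ ↦ ξ³ * e^ξ * (e^ξ + 1) / (e^ξ - 1)³ is integrable on (0, ∞) and I₁(3) = π². -/

import Mathlib

/-!
Expanding in powers of `e^{-ξ}`, `e^ξ (e^ξ + 1) / (e^ξ - 1)³ = ∑_{n ≥ 0} (n + 1)² e^{-(n+1)ξ}`.
The terms are nonnegative, so the series may be integrated termwise, and
`∫₀^∞ ξ^d e^{-(n+1)ξ} dξ = d! / (n + 1)^(d+1)` gives `I₁(d) = d! ζ(d - 1)` for `d ≥ 3`.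
For `d = 3` this is `6 ζ(2) = π²`.
-/

open Real MeasureTheory Set
open scoped Nat

namespace MeasureTheory

variable {ι α : Type*} [Countable ι] [MeasurableSpace α] {μ : Measure α} {F : ι → α → ℝ}
  {f : α → ℝ}

theorem integrable_of_hasSum_of_nonneg (hF_nonneg : ∀ i, 0 ≤ᵐ[μ] F i)
    (hF_int : ∀ i, Integrable (F i) μ) (hF_sum : Summable fun i ↦ ∫ a, F i a ∂μ)
    (hf : ∀ᵐ a ∂μ, HasSum (F · a) (f a)) : Integrable f μ := by
  have hF_meas i : AEMeasurable (fun a ↦ ENNReal.ofReal (F i a)) μ :=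
    (hF_int i).aemeasurable.ennreal_ofReal
  have hlintegral : ∫⁻ a, ∑' i, ENNReal.ofReal (F i a) ∂μ ≠ ⊤ := by
    rw [lintegral_tsum hF_meas]
    simp_rw [← ofReal_integral_eq_lintegral_ofReal (hF_int _) (hF_nonneg _)]
    rw [← ENNReal.ofReal_tsum_of_nonneg (fun i ↦ integral_nonneg_of_ae (hF_nonneg i)) hF_sum]
    exact ENNReal.ofReal_ne_top
  refine (integrable_toReal_of_lintegral_ne_top (AEMeasurable.tsum hF_meas)
    hlintegral).congr ?_
  filter_upwards [hf, ae_all_iff.mpr hF_nonneg] with a ha hpos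
  rw [← ENNReal.ofReal_tsum_of_nonneg hpos ha.summable, ha.tsum_eq,
    ENNReal.toReal_ofReal (ha.nonneg hpos)]

theorem hasSum_integral_of_hasSum_of_nonneg (hF_nonneg : ∀ i, 0 ≤ᵐ[μ] F i)
    (hF_int : ∀ i, Integrable (F i) μ) (hF_sum : Summable fun i ↦ ∫ a, F i a ∂μ)
    (hf : ∀ᵐ a ∂μ, HasSum (F · a) (f a)) : HasSum (fun i ↦ ∫ a, F i a ∂μ) (∫ a, f a ∂μ) := by
  have hnorm i : ∫ a, ‖F i a‖ ∂μ = ∫ a, F i a ∂μ :=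
    integral_congr_ae <| (hF_nonneg i).mono fun a ha ↦ Real.norm_of_nonneg ha
  rw [integral_congr_ae (hf.mono fun a ha ↦ ha.tsum_eq.symm)]
  exact hasSum_integral_of_summable_integral_norm hF_int (by simpa only [hnorm] using hF_sum)

end MeasureTheory

theorem hasSum_succ_sq_mul_geometric {𝕜 : Type*} [NormedField 𝕜] [HasSummableGeomSeries 𝕜]
    {r : 𝕜} (hr : ‖r‖ < 1) :
    HasSum (fun n : ℕ ↦ ((n : 𝕜) + 1) ^ 2 * r ^ n) ((1 + r) / (1 - r) ^ 3) := by
  have hr1 : 1 - r ≠ 0 := sub_ne_zero.mpr fun h ↦ by simp [← h] at hr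
  have h := ((hasSum_choose_mul_geometric_of_norm_lt_one 2 hr).mul_left 2).sub
    (hasSum_choose_mul_geometric_of_norm_lt_one 1 hr)
  rw [show (1 + r) / (1 - r) ^ 3 = 2 * (1 / (1 - r) ^ (2 + 1)) - 1 / (1 - r) ^ (1 + 1) by
    field_simp; ring]
  refine h.congr_fun fun n ↦ ?_
  have hchoose : (n + 2).choose 2 * 2 = (n + 2) * (n + 1) :=
    (Nat.add_one_mul_choose_eq (n + 1) 1).symm.trans (by simp)
  rw [Nat.choose_one_right, ← mul_assoc, mul_comm 2, ← Nat.cast_ofNat (R := 𝕜) (n := 2),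
    ← Nat.cast_mul, hchoose]
  push_cast
  ring

theorem hasSum_succ_sq_mul_exp_neg_mul {ξ : ℝ} (hξ : 0 < ξ) :
    HasSum (fun n : ℕ ↦ ((n : ℝ) + 1) ^ 2 * exp (-(((n : ℝ) + 1) * ξ)))
      (exp ξ * (exp ξ + 1) / (exp ξ - 1) ^ 3) := by
  have hr : ‖exp (-ξ)‖ < 1 := by
    rw [norm_of_nonneg (exp_pos _).le, exp_lt_one_iff]
    linarith
  have hexp : exp ξ - 1 ≠ 0 := (sub_pos.mpr (one_lt_exp_iff.mpr hξ)).ne'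
  rw [show exp ξ * (exp ξ + 1) / (exp ξ - 1) ^ 3
      = (1 + exp (-ξ)) / (1 - exp (-ξ)) ^ 3 * exp (-ξ) by
    rw [exp_neg]; field_simp]
  refine ((hasSum_succ_sq_mul_geometric hr).mul_right (exp (-ξ))).congr_fun fun n ↦ ?_
  rw [mul_assoc, ← pow_succ, ← exp_nat_mul]
  push_cast
  ring_nf

theorem integrableOn_pow_mul_exp_neg_mul_Ioi (d : ℕ) {b : ℝ} (hb : 0 < b) :
    IntegrableOn (fun ξ : ℝ ↦ ξ ^ d * exp (-(b * ξ))) (Ioi 0) := by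
  refine (integrableOn_rpow_mul_exp_neg_mul_rpow (s := d) (p := 1)
    (neg_one_lt_zero.trans_le d.cast_nonneg) one_pos hb).congr_fun (fun ξ _ ↦ ?_) measurableSet_Ioi
  simp [neg_mul]

theorem integral_pow_mul_exp_neg_mul_Ioi (d : ℕ) {b : ℝ} (hb : 0 < b) :
    ∫ ξ in Ioi 0, ξ ^ d * exp (-(b * ξ)) = d ! / b ^ (d + 1) := by
  have h := integral_rpow_mul_exp_neg_mul_Ioi (a := d + 1) (by positivity) hb
  rw [Gamma_nat_eq_factorial, ← Nat.cast_add_one, rpow_natCast, one_div, inv_pow,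
    ← div_eq_inv_mul] at h
  rw [← h]
  refine setIntegral_congr_fun measurableSet_Ioi fun ξ _ ↦ ?_
  simp

theorem hasSum_one_div_succ_sq : HasSum (fun n : ℕ ↦ 1 / ((n : ℝ) + 1) ^ 2) (π ^ 2 / 6) := by
  simpa using (hasSum_nat_add_iff' 1).mpr hasSum_zeta_two

noncomputable def I₁Integrand (d : ℕ) (ξ : ℝ) : ℝ :=
  ξ ^ d * exp ξ * (exp ξ + 1) / (exp ξ - 1) ^ 3

noncomputable def I₁Term (d n : ℕ) (ξ : ℝ) : ℝ :=
  ((n : ℝ) + 1) ^ 2 * (ξ ^ d * exp (-(((n : ℝ) + 1) * ξ)))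

section

variable {d : ℕ}

theorem I₁Term_nonneg_ae (d n : ℕ) : 0 ≤ᵐ[volume.restrict (Ioi 0)] I₁Term d n :=
  ae_restrict_of_forall_mem measurableSet_Ioi fun ξ (hξ : 0 < ξ) ↦ by
    unfold I₁Term
    positivity

theorem hasSum_I₁Term_ae (d : ℕ) :
    ∀ᵐ ξ ∂volume.restrict (Ioi 0), HasSum (I₁Term d · ξ) (I₁Integrand d ξ) :=
  ae_restrict_of_forall_mem measurableSet_Ioi fun ξ hξ ↦ by
    rw [I₁Integrand, mul_assoc, mul_div_assoc]
    exact ((hasSum_succ_sq_mul_exp_neg_mul hξ).mul_left (ξ ^ d)).congr_fun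
      fun n ↦ mul_left_comm _ _ _

theorem integrableOn_I₁Term (d n : ℕ) : IntegrableOn (I₁Term d n) (Ioi 0) :=
  (integrableOn_pow_mul_exp_neg_mul_Ioi d (by positivity)).const_mul _

theorem integral_I₁Term (hd : 1 ≤ d) (n : ℕ) :
    ∫ ξ in Ioi 0, I₁Term d n ξ = d ! / ((n : ℝ) + 1) ^ (d - 1) := by
  simp only [I₁Term]
  rw [integral_const_mul, integral_pow_mul_exp_neg_mul_Ioi d (by positivity)]
  obtain ⟨k, rfl⟩ : ∃ k, d = k + 1 := ⟨d - 1, by omega⟩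
  rw [Nat.add_sub_cancel]
  field_simp
  ring

theorem summable_integral_I₁Term (hd : 3 ≤ d) :
    Summable fun n : ℕ ↦ ∫ ξ in Ioi 0, I₁Term d n ξ := by
  simp_rw [integral_I₁Term (by omega : 1 ≤ d)]
  have h := (summable_nat_add_iff 1).mpr
    (Real.summable_one_div_nat_pow.mpr (by omega : 1 < d - 1))
  simpa [div_eq_mul_one_div (d ! : ℝ)] using h.mul_left (d ! : ℝ)

theorem integrableOn_I₁Integrand (hd : 3 ≤ d) : IntegrableOn (I₁Integrand d) (Ioi 0) :=
  integrable_of_hasSum_of_nonneg (I₁Term_nonneg_ae d) (integrableOn_I₁Term d)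
    (summable_integral_I₁Term hd) (hasSum_I₁Term_ae d)

theorem hasSum_integral_I₁Integrand (hd : 3 ≤ d) :
    HasSum (fun n : ℕ ↦ d ! / ((n : ℝ) + 1) ^ (d - 1)) (∫ ξ in Ioi 0, I₁Integrand d ξ) := by
  have h := hasSum_integral_of_hasSum_of_nonneg (I₁Term_nonneg_ae d) (integrableOn_I₁Term d)
    (summable_integral_I₁Term hd) (hasSum_I₁Term_ae d)
  simpa only [integral_I₁Term (by omega : 1 ≤ d)] using h

end

/-- The integrand of `I₁(3)` is integrable on `(0, ∞)` and `I₁(3) = π²`, where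
`I₁(d) = ∫₀^∞ ξ^d e^ξ (e^ξ + 1)/(e^ξ - 1)³ dξ`. -/
theorem I1_three_eq_pi_sq :
    IntegrableOn
      (fun ξ : ℝ => ξ ^ 3 * Real.exp ξ * (Real.exp ξ + 1) / (Real.exp ξ - 1) ^ 3)
      (Set.Ioi (0 : ℝ)) ∧
    ∫ ξ in Set.Ioi (0 : ℝ),
        ξ ^ 3 * Real.exp ξ * (Real.exp ξ + 1) / (Real.exp ξ - 1) ^ 3 = π ^ 2 := by
  refine ⟨integrableOn_I₁Integrand le_rfl, (hasSum_integral_I₁Integrand le_rfl).unique ?_⟩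
  rw [show π ^ 2 = 6 * (π ^ 2 / 6) by ring]
  refine (hasSum_one_div_succ_sq.mul_left 6).congr_fun fun n ↦ ?_
  norm_num [Nat.factorial]
  ring
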